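/- Let d, k, n ≥ 1, let K ⊆ ℝ^d be compact, let Z_1, …, Z_n ∈ ℝ^d, and let λ > 0. Let 𝒦, η : ℝ^d → ℝ be integrable functions such that the Fourier transform 𝓕η(t) ≠ 0 for every t ∈ ℝ^d and the function t ↦ 𝓕𝒦(t)/𝓕η(t/λ) is integrable; define the deconvolution kernel 𝒦_η : ℝ^d → ℝ as the inverse Fourier transform of t ↦ 𝓕𝒦(t)/𝓕η(t/λ), and assume 𝒦_η is bounded and continuous. Define the deconvolution empirical distortion W̃_n(c) = (1/n) Σ_{i=1}^n ∫_K min_{j=1,…,k} ‖x − c_j‖² λ^{−d} 𝒦_η((Z_i − x)/λ) dx for c = (c_1,…,c_k) ∈ (ℝ^d)^k. Suppose c has pairwise distinct centers and for every j ∈ {1,…,k} and every coordinate ℓ ∈ {1,…,d}: c_{ℓ,j} · Σ_{i=1}^n ∫_{V_j(c) ∩ K} 𝒦_η((Z_i − x)/λ) dx = Σ_{i=1}^n ∫_{V_j(c) ∩ K} x_ℓ 𝒦_η((Z_i − x)/λ) dx, where c_{ℓ,j} is the ℓ-th coordinate of c_j. Then every directional derivative of W̃_n at c is zero, i.e. ∇W̃_n(c)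 = 0. -/

import Mathlib

open MeasureTheory FourierTransform

/-- The Voronoi cell of index `j` for the codebook `c`. -/
def voronoiCell {d k : ℕ} (c : Fin k → EuclideanSpace ℝ (Fin d)) (j : Fin k) :
    Set (EuclideanSpace ℝ (Fin d)) :=
  {x | ∀ u : Fin k, ‖x - c j‖ ≤ ‖x - c u‖}

/-!
With `G(x) = Σᵢ 𝒦_η((Zᵢ − x)/λ)`, which is continuous, `W̃_n(c) = (n λ^d)⁻¹ ∫_K m_c(x) G(x) dx`
where `m_c(x) = min_j ‖x − c_j‖²`. Since the centers are distinct, ties between Voronoi cells only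
happen on finitely many perpendicular bisectors, a Lebesgue-null set. Off that set, if `x` lies in
the cell `V_j`, then `h ↦ m_{c + h c'}(x)` has derivative `−2⟪x − c_j, c'_j⟫` at `0`. It is also
Lipschitz in `h` near `0`, with a constant that is continuous in `x`, so we may differentiate
under the integral. The directional derivative is therefore
`−2 (n λ^d)⁻¹ Σ_j ∫_{V_j ∩ K} ⟪x − c_j, c'_j⟫ G(x) dx`, and by the centroid conditions each
summand vanishes.
-/

open scoped RealInnerProductSpace NNReal
open Metric Filter Topology

section Infimum

variable {ι : Type*} [Finite ι] [Nonempty ι]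

theorem ciInf_le_ciInf_add_of_abs_sub_le {a b : ι → ℝ} {C : ℝ} (h : ∀ u, |a u - b u| ≤ C) :
    ⨅ u, a u ≤ (⨅ u, b u) + C := by
  obtain ⟨u, hu⟩ := exists_eq_ciInf_of_finite (f := b)
  calc ⨅ u, a u ≤ a u := ciInf_le (Finite.bddBelow_range a) u
    _ ≤ b u + C := by linarith [(abs_le.1 (h u)).2]
    _ = (⨅ u, b u) + C := by rw [hu]

theorem abs_ciInf_sub_ciInf_le {a b : ι → ℝ} {C : ℝ} (h : ∀ u, |a u - b u| ≤ C) :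
    |(⨅ u, a u) - ⨅ u, b u| ≤ C := by
  have h' : ∀ u, |b u - a u| ≤ C := fun u => abs_sub_comm (a u) (b u) ▸ h u
  rw [abs_sub_le_iff]
  constructor <;>
    linarith [ciInf_le_ciInf_add_of_abs_sub_le h, ciInf_le_ciInf_add_of_abs_sub_le h']

theorem LipschitzOnWith.ciInf {α : Type*} [PseudoMetricSpace α] {f : ι → α → ℝ} {L : ℝ≥0}
    {s : Set α} (hf : ∀ i, LipschitzOnWith L (f i) s) :
    LipschitzOnWith L (fun x => ⨅ i, f i x) s :=
  LipschitzOnWith.of_dist_le_mul fun x hx y hy => by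
    simpa only [Real.dist_eq] using abs_ciInf_sub_ciInf_le fun i => by
      simpa only [Real.dist_eq] using (hf i).dist_le_mul x hx y hy

end Infimum

theorem LipschitzOnWith.mul_const {α : Type*} [PseudoMetricSpace α] {f : α → ℝ} {L : ℝ≥0}
    {s : Set α} (hf : LipschitzOnWith L f s) (a : ℝ) :
    LipschitzOnWith (L * Real.nnabs a) (fun x => f x * a) s :=
  LipschitzOnWith.of_dist_le_mul fun x hx y hy => by
    rw [Real.dist_eq, ← sub_mul, abs_mul, NNReal.coe_mul, Real.coe_nnabs, mul_right_comm]
    exact mul_le_mul_of_nonneg_right (hf.dist_le_mul x hx y hy) (abs_nonneg a)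

theorem lipschitzOnWith_norm_sub_smul_sq {E : Type*} [SeminormedAddCommGroup E]
    [NormedSpace ℝ E] (a v : E) :
    LipschitzOnWith (Real.nnabs (2 * (‖a‖ + ‖v‖) * ‖v‖)) (fun h : ℝ => ‖a - h • v‖ ^ 2)
      (ball 0 1) := by
  refine LipschitzOnWith.of_dist_le_mul fun h hh h' hh' => ?_
  have hle : ∀ t ∈ ball (0 : ℝ) 1, ‖a - t • v‖ ≤ ‖a‖ + ‖v‖ := fun t ht => by
    rw [mem_ball_zero_iff, Real.norm_eq_abs] at ht
    calc ‖a - t • v‖ ≤ ‖a‖ + |t| * ‖v‖ := by simpa [norm_smul] using norm_sub_le a (t • v)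
      _ ≤ ‖a‖ + ‖v‖ := by gcongr; nlinarith [norm_nonneg v]
  have hdiff : |‖a - h • v‖ - ‖a - h' • v‖| ≤ ‖v‖ * |h - h'| := by
    calc |‖a - h • v‖ - ‖a - h' • v‖| ≤ ‖(a - h • v) - (a - h' • v)‖ := abs_norm_sub_norm_le _ _
      _ = ‖v‖ * |h - h'| := by
        rw [sub_sub_sub_cancel_left, ← sub_smul, norm_smul, Real.norm_eq_abs, abs_sub_comm,
          mul_comm]
  have hC : 0 ≤ 2 * (‖a‖ + ‖v‖) * ‖v‖ := by positivity
  rw [Real.dist_eq, Real.dist_eq, Real.coe_nnabs, abs_of_nonneg hC, sq_sub_sq, abs_mul,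
    abs_of_nonneg (add_nonneg (norm_nonneg _) (norm_nonneg _))]
  calc (‖a - h • v‖ + ‖a - h' • v‖) * |‖a - h • v‖ - ‖a - h' • v‖|
      ≤ (2 * (‖a‖ + ‖v‖)) * (‖v‖ * |h - h'|) := by
        gcongr
        linarith [hle h hh, hle h' hh']
    _ = 2 * (‖a‖ + ‖v‖) * ‖v‖ * |h - h'| := by ring

section MinSqDist

variable {ι E : Type*} [Fintype ι] [NormedAddCommGroup E]

noncomputable def minSqDist (c : ι → E) (x : E) : ℝ := ⨅ j, ‖x - c j‖ ^ 2

variable [Nonempty ι]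

theorem continuous_minSqDist (c : ι → E) : Continuous (minSqDist c) := by
  have h := Continuous.finset_inf'_apply (s := Finset.univ)
    (f := fun j x => ‖x - c j‖ ^ 2) Finset.univ_nonempty fun j _ => by fun_prop
  convert h using 2 with x
  exact (Finset.inf'_univ_eq_ciInf _).symm

theorem minSqDist_eq_of_forall_le {c : ι → E} {x : E} {j : ι}
    (h : ∀ u, ‖x - c j‖ ≤ ‖x - c u‖) : minSqDist c x = ‖x - c j‖ ^ 2 :=
  le_antisymm (ciInf_le (Finite.bddBelow_range _) j) (le_ciInf fun u => by gcongr; exact h u)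

theorem hasDerivAt_minSqDist_add_smul [InnerProductSpace ℝ E] {c : ι → E} {x : E} {j : ι}
    (hj : ∀ u ≠ j, ‖x - c j‖ < ‖x - c u‖) (c' : ι → E) :
    HasDerivAt (fun h : ℝ => minSqDist (c + h • c') x) (-2 * ⟪x - c j, c' j⟫) 0 := by
  have hcont : ∀ u, Continuous fun h : ℝ => ‖x - (c + h • c') u‖ := fun u => by
    simp only [Pi.add_apply, Pi.smul_apply]; fun_prop
  have hnear : ∀ᶠ h : ℝ in 𝓝 0, ∀ u ≠ j, ‖x - (c + h • c') j‖ < ‖x - (c + h • c') u‖ := by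
    refine eventually_all.2 fun u => ?_
    rcases eq_or_ne u j with rfl | hu
    · exact Eventually.of_forall fun _ hu => absurd rfl hu
    · refine ((hcont j).continuousAt.eventually_lt (hcont u).continuousAt ?_).mono
        fun _ hlt _ => hlt
      simpa using hj u hu
  have hmin : (fun h : ℝ => minSqDist (c + h • c') x) =ᶠ[𝓝 0]
      fun h => ‖x - (c j + h • c' j)‖ ^ 2 :=
    hnear.mono fun h hh => minSqDist_eq_of_forall_le fun u =>
      (eq_or_ne u j).elim (fun hu => hu ▸ le_rfl) fun hu => (hh u hu).le
  have hsq : HasDerivAt (fun h : ℝ => ‖x - (c j + h • c' j)‖ ^ 2) (-2 * ⟪x - c j, c' j⟫) 0 := by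
    simpa using (((hasDerivAt_id (0 : ℝ)).smul_const (c' j)).const_add (c j)).const_sub x
      |>.norm_sq
  exact hsq.congr_of_eventuallyEq hmin

theorem lipschitzOnWith_minSqDist_add_smul [NormedSpace ℝ E] (c c' : ι → E) (x : E) :
    LipschitzOnWith (Real.nnabs (∑ j, 2 * (‖x - c j‖ + ‖c' j‖) * ‖c' j‖))
      (fun h : ℝ => minSqDist (c + h • c') x) (ball 0 1) := by
  refine LipschitzOnWith.ciInf fun j => ?_
  have hle : Real.nnabs (2 * (‖x - c j‖ + ‖c' j‖) * ‖c' j‖) ≤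
      Real.nnabs (∑ j, 2 * (‖x - c j‖ + ‖c' j‖) * ‖c' j‖) := by
    have hterm : ∀ u, 0 ≤ 2 * (‖x - c u‖ + ‖c' u‖) * ‖c' u‖ := fun u => by positivity
    rw [Real.nnabs_of_nonneg (hterm j), Real.nnabs_of_nonneg (Finset.sum_nonneg fun u _ => hterm u)]
    exact Real.toNNReal_le_toNNReal (Finset.single_le_sum (fun u _ => hterm u) (Finset.mem_univ j))
  simpa only [Pi.add_apply, Pi.smul_apply, sub_add_eq_sub_sub] using
    (lipschitzOnWith_norm_sub_smul_sq (x - c j) (c' j)).weaken hle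

end MinSqDist

theorem ae_norm_sub_ne_norm_sub {E : Type*} [NormedAddCommGroup E] [InnerProductSpace ℝ E]
    [FiniteDimensional ℝ E] [MeasurableSpace E] [BorelSpace E] (μ : Measure E)
    [μ.IsAddHaarMeasure] {p q : E} (hpq : p ≠ q) : ∀ᵐ x ∂μ, ‖x - p‖ ≠ ‖x - q‖ := by
  have hbis : {x | ¬‖x - p‖ ≠ ‖x - q‖} = AffineSubspace.perpBisector p q := by
    ext x
    simp [AffineSubspace.mem_perpBisector_iff_dist_eq, dist_eq_norm]
  rw [ae_iff, hbis]
  exact Measure.addHaar_affineSubspace μ _ (by simpa using hpq)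

section Voronoi

variable {d k : ℕ}

theorem isClosed_voronoiCell (c : Fin k → EuclideanSpace ℝ (Fin d)) (j : Fin k) :
    IsClosed (voronoiCell c j) := by
  simp only [voronoiCell, Set.ofPred_forall]
  exact isClosed_iInter fun u => isClosed_le (by fun_prop) (by fun_prop)

variable {c : Fin k → EuclideanSpace ℝ (Fin d)}

theorem ae_norm_sub_lt_of_mem_voronoiCell (hc : Function.Injective c) :
    ∀ᵐ x, ∀ j, x ∈ voronoiCell c j → ∀ u ≠ j, ‖x - c j‖ < ‖x - c u‖ := by
  have hties : ∀ᵐ x, ∀ j u, u ≠ j → ‖x - c j‖ ≠ ‖x - c u‖ := by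
    refine ae_all_iff.2 fun j => ae_all_iff.2 fun u => ?_
    rcases eq_or_ne u j with rfl | hu
    · exact ae_of_all _ fun _ hu => absurd rfl hu
    · exact (ae_norm_sub_ne_norm_sub volume (hc.ne hu.symm)).mono fun _ hx _ => hx
  filter_upwards [hties] with x hx j hxj u hu
  exact (hxj u).lt_of_ne (hx j u hu)

/-- Off the null set of ties this is the derivative of `h ↦ minSqDist (c + h • c') x` at `0`;
on a tie it adds up the contributions of several cells. -/
noncomputable def voronoiDirDeriv (c c' : Fin k → EuclideanSpace ℝ (Fin d))
    (x : EuclideanSpace ℝ (Fin d)) : ℝ :=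
  ∑ j, (voronoiCell c j).indicator (fun y => -2 * ⟪y - c j, c' j⟫) x

theorem measurable_voronoiDirDeriv (c c' : Fin k → EuclideanSpace ℝ (Fin d)) :
    Measurable (voronoiDirDeriv c c') :=
  Finset.measurable_sum _ fun j _ =>
    (by fun_prop : Continuous _).measurable.indicator (isClosed_voronoiCell c j).measurableSet

theorem ae_hasDerivAt_minSqDist_add_smul [Nonempty (Fin k)] (hc : Function.Injective c)
    (c' : Fin k → EuclideanSpace ℝ (Fin d)) :
    ∀ᵐ x, HasDerivAt (fun h : ℝ => minSqDist (c + h • c') x) (voronoiDirDeriv c c' x) 0 := by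
  filter_upwards [ae_norm_sub_lt_of_mem_voronoiCell hc] with x hx
  obtain ⟨j, hj⟩ : ∃ j, x ∈ voronoiCell c j := Finite.exists_min fun u => ‖x - c u‖
  have hstrict := hx j hj
  rw [voronoiDirDeriv, Finset.sum_eq_single j, Set.indicator_of_mem hj]
  · exact hasDerivAt_minSqDist_add_smul hstrict c'
  · refine fun u _ hu => Set.indicator_of_notMem (fun hxu => ?_) _
    exact (hstrict u hu).not_ge (hxu j)
  · simp

theorem setIntegral_voronoiDirDeriv_mul {K : Set (EuclideanSpace ℝ (Fin d))} (hK : IsCompact K)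
    {g : EuclideanSpace ℝ (Fin d) → ℝ} (hg : Continuous g)
    (c' : Fin k → EuclideanSpace ℝ (Fin d)) :
    ∫ x in K, voronoiDirDeriv c c' x * g x =
      -2 * ∑ j, ∫ x in voronoiCell c j ∩ K, ⟪x - c j, c' j⟫ * g x := by
  have hmeas := fun j => (isClosed_voronoiCell c j).measurableSet
  simp only [voronoiDirDeriv, Finset.sum_mul, ← Set.indicator_mul_left]
  rw [integral_finsetSum _ fun j _ => ?_]
  · simp only [integral_indicator (hmeas _), Measure.restrict_restrict (hmeas _), mul_assoc,
      integral_const_mul, Finset.mul_sum]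
  · exact (ContinuousOn.integrableOn_compact hK (by fun_prop)).indicator (hmeas j)

theorem hasDerivAt_setIntegral_minSqDist_mul [Nonempty (Fin k)] (hc : Function.Injective c)
    {K : Set (EuclideanSpace ℝ (Fin d))} (hK : IsCompact K) {g : EuclideanSpace ℝ (Fin d) → ℝ}
    (hg : Continuous g) (c' : Fin k → EuclideanSpace ℝ (Fin d)) :
    HasDerivAt (fun h : ℝ => ∫ x in K, minSqDist (c + h • c') x * g x)
      (-2 * ∑ j, ∫ x in voronoiCell c j ∩ K, ⟪x - c j, c' j⟫ * g x) 0 := by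
  rw [← setIntegral_voronoiDirDeriv_mul hK hg c']
  refine (hasDerivAt_integral_of_dominated_loc_of_lip (ball_mem_nhds 0 one_pos)
    (bound := fun x => (∑ j, 2 * (‖x - c j‖ + ‖c' j‖) * ‖c' j‖) * g x) ?_ ?_ ?_ ?_ ?_ ?_).2
  · exact Eventually.of_forall fun h =>
      ((continuous_minSqDist _).mul hg).aestronglyMeasurable
  · exact ((continuous_minSqDist _).mul hg).continuousOn.integrableOn_compact hK
  · exact ((measurable_voronoiDirDeriv c c').mul hg.measurable).aestronglyMeasurable
  · refine ae_of_all _ fun x => ?_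
    rw [map_mul]
    exact (lipschitzOnWith_minSqDist_add_smul c c' x).mul_const (g x)
  · exact ContinuousOn.integrableOn_compact hK (by fun_prop)
  · exact ae_restrict_of_ae ((ae_hasDerivAt_minSqDist_add_smul hc c').mono
      fun x hx => hx.mul_const (g x))

end Voronoi

theorem integral_inner_sub_mul_eq_zero {d : ℕ} {μ : Measure (EuclideanSpace ℝ (Fin d))}
    {w : EuclideanSpace ℝ (Fin d) → ℝ} {p : EuclideanSpace ℝ (Fin d)} (hw : Integrable w μ)
    (hxw : ∀ ℓ, Integrable (fun x => x ℓ * w x) μ) (hp : ∀ ℓ, p ℓ * ∫ x, w x ∂μ = ∫ x, x ℓ * w x ∂μ)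
    (v : EuclideanSpace ℝ (Fin d)) : ∫ x, ⟪x - p, v⟫ * w x ∂μ = 0 := by
  have hexpand : ∀ x : EuclideanSpace ℝ (Fin d),
      ⟪x - p, v⟫ * w x = ∑ ℓ, v ℓ * (x ℓ * w x - p ℓ * w x) := fun x => by
    simp only [PiLp.inner_apply, RCLike.inner_apply, conj_trivial, Finset.sum_mul]
    exact Finset.sum_congr rfl fun ℓ _ => by simp only [PiLp.sub_apply]; ring
  simp only [hexpand]
  rw [integral_finsetSum _ fun ℓ _ => ?_]
  swap
  · exact ((hxw ℓ).sub (hw.const_mul _)).const_mul _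
  refine Finset.sum_eq_zero fun ℓ _ => ?_
  rw [integral_const_mul, integral_sub (hxw ℓ) (hw.const_mul _), integral_const_mul, hp ℓ,
    sub_self, mul_zero]

theorem noisy_kmeans_first_order_conditions_general
    (d k n : ℕ)
    (K : Set (EuclideanSpace ℝ (Fin d))) (hK : IsCompact K)
    (Z : Fin n → EuclideanSpace ℝ (Fin d))
    (lam : ℝ)
    (Kη : EuclideanSpace ℝ (Fin d) → ℝ)
    (hKη_cont : Continuous Kη)
    (W : (Fin k → EuclideanSpace ℝ (Fin d)) → ℝ)
    (hW : W = fun c => (1 / (n : ℝ)) * ∑ i : Fin n,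
      ∫ x in K, (⨅ j : Fin k, ‖x - c j‖ ^ 2) * ((lam ^ d)⁻¹ * Kη (lam⁻¹ • (Z i - x))))
    (c : Fin k → EuclideanSpace ℝ (Fin d))
    (hc : Function.Injective c)
    (hfoc : ∀ (j : Fin k) (ℓ : Fin d),
      c j ℓ * ∑ i : Fin n, ∫ x in voronoiCell c j ∩ K, Kη (lam⁻¹ • (Z i - x)) =
        ∑ i : Fin n, ∫ x in voronoiCell c j ∩ K, x ℓ * Kη (lam⁻¹ • (Z i - x))) :
    ∀ c' : Fin k → EuclideanSpace ℝ (Fin d),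
      Filter.Tendsto (fun h : ℝ => (W (c + h • c') - W c) / h)
        (nhdsWithin 0 {0}ᶜ) (nhds 0) := by
  intro c'
  rcases isEmpty_or_nonempty (Fin k) with hk | hk
  · simp only [Subsingleton.elim (c + _ • c') c, sub_self, zero_div]
    exact tendsto_const_nhds
  set G := fun x => ∑ i, Kη (lam⁻¹ • (Z i - x))
  have hintegrable : ∀ {f : EuclideanSpace ℝ (Fin d) → ℝ} {A}, Continuous f → A ⊆ K →
      IntegrableOn f A :=
    fun hf hA => (hf.continuousOn.integrableOn_compact hK).mono_set hA
  have hW' : ∀ b, W b = 1 / n * (lam ^ d)⁻¹ * ∫ x in K, minSqDist b x * G x := fun b => by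
    have hpt : ∀ x, (lam ^ d)⁻¹ * (minSqDist b x * G x) =
        ∑ i, minSqDist b x * ((lam ^ d)⁻¹ * Kη (lam⁻¹ • (Z i - x))) := fun x => by
      simp only [G, Finset.mul_sum]
      exact Finset.sum_congr rfl fun i _ => by ring
    rw [mul_assoc, ← integral_const_mul]
    simp only [hpt]
    rw [integral_finsetSum _ fun i _ => ?_, hW]
    · rfl
    · exact hintegrable ((continuous_minSqDist b).mul (by fun_prop)) subset_rfl
  have hcentroid : ∀ j ℓ, c j ℓ * ∫ x in voronoiCell c j ∩ K, G x =
      ∫ x in voronoiCell c j ∩ K, x ℓ * G x := fun j ℓ => by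
    simp only [G, Finset.mul_sum]
    rw [integral_finsetSum _ fun i _ => hintegrable (by fun_prop) Set.inter_subset_right,
      integral_finsetSum _ fun i _ => hintegrable (by fun_prop) Set.inter_subset_right]
    exact hfoc j ℓ
  have hderiv := (hasDerivAt_setIntegral_minSqDist_mul hc hK
    (by fun_prop : Continuous G) c').const_mul (1 / n * (lam ^ d)⁻¹)
  rw [Finset.sum_eq_zero fun j _ => integral_inner_sub_mul_eq_zero
    (hintegrable (by fun_prop) Set.inter_subset_right)
    (fun ℓ => hintegrable (by fun_prop) Set.inter_subset_right) (hcentroid j) (c' j),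
    mul_zero, mul_zero] at hderiv
  simpa [hW', div_eq_inv_mul] using hderiv.tendsto_slope_zero

/-- First-order conditions for the deconvolution empirical distortion of
noisy `k`-means: if the codebook `c` (with pairwise distinct centers) satisfies, on every
Voronoi cell and in every coordinate, the deconvolution centroid conditions, then every
directional derivative of the deconvolution empirical distortion
`W̃_n(c) = (1/n) Σ_i ∫_K min_j ‖x − c_j‖² λ^{−d} 𝒦_η((Z_i − x)/λ) dx` at `c` vanishes. -/
theorem noisy_kmeans_first_order_conditions
    (d k n : ℕ) (hd : 1 ≤ d) (hk : 1 ≤ k) (hn : 1 ≤ n)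
    (K : Set (EuclideanSpace ℝ (Fin d))) (hK : IsCompact K)
    (Z : Fin n → EuclideanSpace ℝ (Fin d))
    (lam : ℝ) (hlam : 0 < lam)
    (Kker η : EuclideanSpace ℝ (Fin d) → ℝ)
    (hKker_int : Integrable Kker) (hη_int : Integrable η)
    (hη_ne : ∀ t, 𝓕 (fun x => (η x : ℂ)) t ≠ 0)
    (hratio_int : Integrable (fun t =>
      𝓕 (fun x => (Kker x : ℂ)) t / 𝓕 (fun x => (η x : ℂ)) (lam⁻¹ • t)))
    (Kη : EuclideanSpace ℝ (Fin d) → ℝ)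
    (hKη : ∀ x : EuclideanSpace ℝ (Fin d), (Kη x : ℂ) =
      𝓕⁻ (fun t => 𝓕 (fun y => (Kker y : ℂ)) t / 𝓕 (fun y => (η y : ℂ)) (lam⁻¹ • t)) x)
    (hKη_bdd : ∃ M : ℝ, ∀ x, |Kη x| ≤ M) (hKη_cont : Continuous Kη)
    (W : (Fin k → EuclideanSpace ℝ (Fin d)) → ℝ)
    (hW : W = fun c => (1 / (n : ℝ)) * ∑ i : Fin n,
      ∫ x in K, (⨅ j : Fin k, ‖x - c j‖ ^ 2) * ((lam ^ d)⁻¹ * Kη (lam⁻¹ • (Z i - x))))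
    (c : Fin k → EuclideanSpace ℝ (Fin d))
    (hc : Function.Injective c)
    (hfoc : ∀ (j : Fin k) (ℓ : Fin d),
      c j ℓ * ∑ i : Fin n, ∫ x in voronoiCell c j ∩ K, Kη (lam⁻¹ • (Z i - x)) =
        ∑ i : Fin n, ∫ x in voronoiCell c j ∩ K, x ℓ * Kη (lam⁻¹ • (Z i - x))) :
    ∀ c' : Fin k → EuclideanSpace ℝ (Fin d),
      Filter.Tendsto (fun h : ℝ => (W (c + h • c') - W c) / h)
        (nhdsWithin 0 {0}ᶜ) (nhds 0) :=
  noisy_kmeans_first_order_conditions_general d k n K hK Z lam Kη hKη_cont W hW c hc hfoc
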